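/- Let M be an n×n matrix over ℂ[[q]] and α a natural number, and let M_{<α} be the matrix obtained by truncating every entry of M modulo q^α. If the discriminant Δ(M_{<α}) = Res(p_{M_{<α}}, p_{M_{<α}}') is not congruent to 0 modulo q^α, then the discriminant Δ(M) is nonzero; in particular the characteristic polynomial of M, viewed over the field of formal Laurent series ℂ((q)), is squarefree, i.e. M has simple spectrum. -/

import Mathlib

/-- The resultant of two polynomials `p` and `q`, computed as the determinant of
the Sylvester matrix built with respect to the degree bounds `m` for `p` and
`n` for `q`. -/
noncomputable def sylvesterRes {R : Type*} [CommRing R] (m n : ℕ)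
    (p q : Polynomial R) : R :=
  (Matrix.of (fun i j : Fin (m + n) =>
    if (i : ℕ) < n then
      (if (j : ℕ) ≤ m + (i : ℕ) then p.coeff (m + (i : ℕ) - (j : ℕ)) else 0)
    else
      (if (j : ℕ) ≤ ((i : ℕ) - n) + n then
        q.coeff (((i : ℕ) - n) + n - (j : ℕ)) else 0))).det

/-- The discriminant `Δ(M) = Res(p_M, p_M')` of a square matrix `M`. -/
noncomputable def matDiscrim {R : Type*} [CommRing R] {n : ℕ}
    (M : Matrix (Fin n) (Fin n) R) : R :=
  sylvesterRes n (n - 1) M.charpoly M.charpoly.derivative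

/-- The truncation `M_{<α}` of a matrix over `ℂ[[q]]` at energy `α`. -/
noncomputable def truncMat {n : ℕ} (α : ℕ)
    (M : Matrix (Fin n) (Fin n) (PowerSeries ℂ)) :
    Matrix (Fin n) (Fin n) (PowerSeries ℂ) :=
  M.map fun f => ((PowerSeries.trunc α f : Polynomial ℂ) : PowerSeries ℂ)

lemma sylvesterRes_map {R S : Type*} [CommRing R] [CommRing S]
    (f : R →+* S) (m n : ℕ) (p q : Polynomial R) :
    sylvesterRes m n (p.map f) (q.map f) = f (sylvesterRes m n p q) := by
  unfold sylvesterRes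
  rw [RingHom.map_det]
  congr 1
  ext i j
  simp [Matrix.map_apply, Polynomial.coeff_map, apply_ite f]

lemma matDiscrim_map {R S : Type*} [CommRing R] [CommRing S] {n : ℕ}
    (f : R →+* S) (M : Matrix (Fin n) (Fin n) R) :
    matDiscrim (M.map f) = f (matDiscrim M) := by
  unfold matDiscrim
  rw [Matrix.charpoly_map, Polynomial.derivative_map, sylvesterRes_map]

lemma sum_sylvester_block {K : Type*} [CommRing K] (u v : Polynomial K)
    (d N : ℕ) (hu : u.natDegree < d) :
    (u * v).coeff N = ∑ k ∈ Finset.range d,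
      u.coeff k * (if k ≤ N then v.coeff (N - k) else 0) := by
  rw [Polynomial.coeff_mul, Finset.Nat.sum_antidiagonal_eq_sum_range_succ_mk]
  have h1 : ∀ k ∈ Finset.range (N + 1),
      u.coeff k * v.coeff (N - k)
        = u.coeff k * (if k ≤ N then v.coeff (N - k) else 0) := by
    intro k hk
    rw [Finset.mem_range] at hk
    rw [if_pos (Nat.lt_succ_iff.mp hk)]
  rw [Finset.sum_congr rfl h1]
  rcases le_total (N + 1) d with hle | hle
  · apply Finset.sum_subset (Finset.range_subset_range.mpr hle)
    intro k _ hk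
    rw [Finset.mem_range, not_lt] at hk
    rw [if_neg (by omega), mul_zero]
  · refine (Finset.sum_subset (Finset.range_subset_range.mpr hle) ?_).symm
    intro k _ hk
    rw [Finset.mem_range, not_lt] at hk
    rw [Polynomial.coeff_eq_zero_of_natDegree_lt (lt_of_lt_of_le hu hk), zero_mul]

lemma sylvesterRes_eq_zero_of_not_isCoprime {K : Type*} [Field K] {m n' : ℕ}
    {p q : Polynomial K} (hp : p ≠ 0) (hq : q ≠ 0)
    (hpm : p.natDegree ≤ m) (hqn : q.natDegree ≤ n')
    (hcop : ¬ IsCoprime p q) : sylvesterRes m n' p q = 0 := by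
  classical
  set g := EuclideanDomain.gcd p q with hg
  have hgp : g ∣ p := EuclideanDomain.gcd_dvd_left p q
  have hgq : g ∣ q := EuclideanDomain.gcd_dvd_right p q
  have hg0 : g ≠ 0 := by
    rintro h0
    rw [h0, zero_dvd_iff] at hgp
    exact hp hgp
  have hgu : ¬ IsUnit g := fun hu => hcop (EuclideanDomain.gcd_isUnit_iff.mp hu)
  have hgd : 1 ≤ g.natDegree := by
    by_contra hd
    push_neg at hd
    have h0 : g.natDegree = 0 := by omega
    obtain ⟨x, hx⟩ := Polynomial.natDegree_eq_zero.mp h0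
    apply hgu
    rw [← hx, Polynomial.isUnit_C]
    apply isUnit_iff_ne_zero.mpr
    rintro rfl
    rw [map_zero] at hx
    exact hg0 hx.symm
  obtain ⟨b, hb⟩ := hgp
  obtain ⟨a, ha⟩ := hgq
  have hb0 : b ≠ 0 := by rintro rfl; rw [mul_zero] at hb; exact hp hb
  have ha0 : a ≠ 0 := by rintro rfl; rw [mul_zero] at ha; exact hq ha
  have hbd : b.natDegree + 1 ≤ m := by
    have h2 := Polynomial.natDegree_mul hg0 hb0
    rw [← hb] at h2
    omega
  have had : a.natDegree + 1 ≤ n' := by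
    have h2 := Polynomial.natDegree_mul hg0 ha0
    rw [← ha] at h2
    omega
  unfold sylvesterRes
  rw [← Matrix.exists_vecMul_eq_zero_iff]
  refine ⟨fun i => if (i : ℕ) < n' then a.coeff (n' - 1 - (i : ℕ))
      else (-b).coeff (m - 1 - ((i : ℕ) - n')), ?_, ?_⟩
  · intro hvz
    have hk : b.coeff b.natDegree ≠ 0 := by
      rw [Polynomial.coeff_natDegree]
      exact Polynomial.leadingCoeff_ne_zero.mpr hb0
    have hidx : n' + (m - 1 - b.natDegree) < m + n' := by omega
    have h3 := congrFun hvz ⟨n' + (m - 1 - b.natDegree), hidx⟩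
    simp only [Pi.zero_apply] at h3
    rw [if_neg (by omega)] at h3
    have harg : m - 1 - ((n' + (m - 1 - b.natDegree) : ℕ) - n') = b.natDegree := by omega
    rw [harg, Polynomial.coeff_neg, neg_eq_zero] at h3
    exact hk h3
  · funext j
    have hj : (j : ℕ) < m + n' := j.isLt
    set N := m + n' - 1 - (j : ℕ) with hN
    set F : ℕ → K := fun i =>
      (if i < n' then a.coeff (n' - 1 - i) else (-b).coeff (m - 1 - (i - n'))) *
      (if i < n' then (if (j : ℕ) ≤ m + i then p.coeff (m + i - (j : ℕ)) else 0)
        else (if (j : ℕ) ≤ (i - n') + n' then q.coeff ((i - n') + n' - (j : ℕ)) else 0))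
      with hF
    have hgoal : (∑ i ∈ Finset.range (m + n'), F i) = 0 := by
      rw [Nat.add_comm m n', Finset.sum_range_add F n' m]
      have B1 : ∑ i ∈ Finset.range n', F i = (a * p).coeff N := by
        rw [sum_sylvester_block a p n' N (by omega)]
        rw [← Finset.sum_range_reflect]
        apply Finset.sum_congr rfl
        intro i hi
        rw [Finset.mem_range] at hi
        simp only [hF]
        have hc1 : n' - 1 - i < n' := by omega
        rw [if_pos hc1, if_pos hc1, show n' - 1 - (n' - 1 - i) = i from by omega]
        by_cases hc : i ≤ N
        · rw [if_pos hc, if_pos (show (j : ℕ) ≤ m + (n' - 1 - i) by omega),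
            show m + (n' - 1 - i) - (j : ℕ) = N - i from by omega]
        · rw [if_neg hc, if_neg (show ¬ (j : ℕ) ≤ m + (n' - 1 - i) by omega)]
      have B2 : ∑ i ∈ Finset.range m, F (n' + i) = ((-b) * q).coeff N := by
        rw [sum_sylvester_block (-b) q m N (by rw [Polynomial.natDegree_neg]; omega)]
        rw [← Finset.sum_range_reflect]
        apply Finset.sum_congr rfl
        intro i hi
        rw [Finset.mem_range] at hi
        simp only [hF]
        have hc1 : ¬ n' + (m - 1 - i) < n' := by omega
        rw [if_neg hc1, if_neg hc1,
          show n' + (m - 1 - i) - n' = m - 1 - i from by omega,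
          show m - 1 - (m - 1 - i) = i from by omega]
        by_cases hc : i ≤ N
        · rw [if_pos hc, if_pos (show (j : ℕ) ≤ (m - 1 - i) + n' by omega),
            show (m - 1 - i) + n' - (j : ℕ) = N - i from by omega]
        · rw [if_neg hc, if_neg (show ¬ (j : ℕ) ≤ (m - 1 - i) + n' by omega)]
      rw [B1, B2, ← Polynomial.coeff_add]
      have hz : a * p + (-b) * q = 0 := by
        rw [hb, ha]; ring
      rw [hz, Polynomial.coeff_zero]
    calc Matrix.vecMul (fun i : Fin (m + n') =>
            if (i : ℕ) < n' then a.coeff (n' - 1 - (i : ℕ))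
            else (-b).coeff (m - 1 - ((i : ℕ) - n')))
          (Matrix.of (fun i j : Fin (m + n') =>
            if (i : ℕ) < n' then
              (if (j : ℕ) ≤ m + (i : ℕ) then p.coeff (m + (i : ℕ) - (j : ℕ)) else 0)
            else
              (if (j : ℕ) ≤ ((i : ℕ) - n') + n' then
                q.coeff (((i : ℕ) - n') + n' - (j : ℕ)) else 0))) j
        = ∑ i : Fin (m + n'), F (i : ℕ) := by
          simp only [Matrix.vecMul, dotProduct, Matrix.of_apply, hF]
      _ = ∑ i ∈ Finset.range (m + n'), F i := Fin.sum_univ_eq_sum_range F (m + n')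
      _ = 0 := hgoal

lemma trunc_sub_mem (α : ℕ) (f : PowerSeries ℂ) :
    (PowerSeries.X : PowerSeries ℂ) ^ α ∣
      ((PowerSeries.trunc α f : Polynomial ℂ) : PowerSeries ℂ) - f := by
  rw [PowerSeries.X_pow_dvd_iff]
  intro m hm
  rw [map_sub, Polynomial.coeff_coe, PowerSeries.coeff_trunc, if_pos hm, sub_self]

/-- If the discriminant of the truncation `M_{<α}` is not congruent to `0`
modulo `q ^ α`, then `Δ(M) ≠ 0`; in particular the characteristic polynomial
of `M` over the Laurent series field `ℂ((q))` is squarefree, i.e. `M` has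
simple spectrum. -/
theorem simple_spectrum_of_truncated_discrim_ne_zero (n α : ℕ)
    (M : Matrix (Fin n) (Fin n) (PowerSeries ℂ))
    (h : ¬ (PowerSeries.X : PowerSeries ℂ) ^ α ∣ matDiscrim (truncMat α M)) :
    matDiscrim M ≠ 0 ∧
      Squarefree ((M.map (HahnSeries.ofPowerSeries ℤ ℂ)).charpoly) := by
  classical
  set I : Ideal (PowerSeries ℂ) :=
    Ideal.span {(PowerSeries.X : PowerSeries ℂ) ^ α} with hI
  set π := Ideal.Quotient.mk I with hπ
  have htr : (truncMat α M).map π = M.map π := by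
    ext i j
    simp only [truncMat, Matrix.map_apply]
    rw [Ideal.Quotient.mk_eq_mk_iff_sub_mem, hI, Ideal.mem_span_singleton]
    exact trunc_sub_mem α (M i j)
  have hMd : matDiscrim M ≠ 0 := by
    intro h0
    apply h
    rw [← Ideal.mem_span_singleton, ← hI, ← Ideal.Quotient.eq_zero_iff_mem, ← hπ,
      ← matDiscrim_map, htr, matDiscrim_map, h0, map_zero]
  refine ⟨hMd, ?_⟩
  set φ := HahnSeries.ofPowerSeries ℤ ℂ with hφdef
  have hφ : Function.Injective ⇑φ := HahnSeries.ofPowerSeries_injective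
  have hD : matDiscrim (M.map φ) ≠ 0 := by
    rw [matDiscrim_map]
    intro h0
    exact hMd (hφ (by rw [h0, map_zero]))
  set P := (M.map φ).charpoly with hP
  have hPm : P.Monic := Matrix.charpoly_monic _
  have hPd : P.natDegree = n := by
    rw [hP, Matrix.charpoly_natDegree_eq_dim, Fintype.card_fin]
  by_cases hn : n = 0
  · have : P = 1 := hPm.natDegree_eq_zero.mp (by omega)
    rw [this]
    exact squarefree_one
  · have hn1 : 1 ≤ n := Nat.pos_of_ne_zero hn
    apply Polynomial.Separable.squarefree
    rw [Polynomial.separable_def]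
    by_contra hsep
    have hnK : ((n : ℕ) : LaurentSeries ℂ) ≠ 0 := by
      intro h0
      have : φ ((n : ℕ) : PowerSeries ℂ) = φ 0 := by
        rw [map_natCast, map_zero, h0]
      have h2 := hφ this
      have h3 := congrArg (PowerSeries.constantCoeff : PowerSeries ℂ →+* ℂ) h2
      rw [map_natCast, map_zero] at h3
      exact Nat.cast_ne_zero.mpr hn (by exact_mod_cast h3)
    have hq0 : P.derivative ≠ 0 := by
      intro hd
      have hc := Polynomial.coeff_derivative P (n - 1)
      have e : n - 1 + 1 = n := by omega
      rw [hd, Polynomial.coeff_zero, e] at hc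
      rw [show P.coeff n = 1 from hPd ▸ hPm.coeff_natDegree] at hc
      rw [one_mul] at hc
      have h4 : ((n - 1 + 1 : ℕ) : LaurentSeries ℂ) = 0 := by exact_mod_cast hc.symm
      rw [e] at h4
      exact hnK h4
    have hzero : sylvesterRes n (n - 1) P (Polynomial.derivative P) = 0 :=
      sylvesterRes_eq_zero_of_not_isCoprime (m := n) (n' := n - 1) hPm.ne_zero hq0
        (le_of_eq hPd)
        (by have h5 := Polynomial.natDegree_derivative_le P; omega) hsep
    apply hD
    show sylvesterRes n (n - 1) ((M.map φ).charpoly)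
      (Polynomial.derivative ((M.map φ).charpoly)) = 0
    rw [← hP]
    exact hzero
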